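/- Let n ≥ 1 and let B_1, B_2 be n×n complex Hermitian matrices. Then Σ_{r,s=1}^2 ‖[B_r, B_s]‖² ≤ (‖B_1‖² + ‖B_2‖²)²; equivalently, 2‖[B_1, B_2]‖² ≤ (‖B_1‖² + ‖B_2‖²)². -/

import Mathlib

open Matrix

/-- Squared Frobenius norm of a complex matrix: `Re tr (A Aᴴ)`. -/
noncomputable def frobSq {n : ℕ} (A : Matrix (Fin n) (Fin n) ℂ) : ℝ :=
  ((A * Aᴴ).trace).re

/-- Commutator of matrices. -/
noncomputable def mcomm {n : ℕ} (A B : Matrix (Fin n) (Fin n) ℂ) : Matrix (Fin n) (Fin n) ℂ :=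
  A * B - B * A

lemma frobSq_eq_sum {n : ℕ} (X : Matrix (Fin n) (Fin n) ℂ) :
    frobSq X = ∑ i, ∑ j, Complex.normSq (X i j) := by
  simp [frobSq, Matrix.trace, Matrix.diag, Matrix.mul_apply, Complex.mul_conj,
    Complex.normSq_eq_norm_sq, ← Complex.ofReal_pow, Complex.ofReal_re]

lemma frobSq_nonneg {n : ℕ} (X : Matrix (Fin n) (Fin n) ℂ) : 0 ≤ frobSq X := by
  rw [frobSq_eq_sum]
  exact Finset.sum_nonneg fun i _ => Finset.sum_nonneg fun j _ => Complex.normSq_nonneg _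

lemma frobSq_neg {n : ℕ} (X : Matrix (Fin n) (Fin n) ℂ) : frobSq (-X) = frobSq X := by
  simp [frobSq_eq_sum]

lemma frobSq_conj {n : ℕ} (u X : Matrix (Fin n) (Fin n) ℂ) (hu : uᴴ * u = 1) :
    frobSq (u * X * uᴴ) = frobSq X := by
  have h : (u * X * uᴴ) * (u * X * uᴴ)ᴴ = u * (X * Xᴴ) * uᴴ := by
    simp only [conjTranspose_mul, conjTranspose_conjTranspose]
    calc u * X * uᴴ * (u * (Xᴴ * uᴴ)) = u * X * (uᴴ * u) * (Xᴴ * uᴴ) := by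
          noncomm_ring
    _ = u * (X * Xᴴ) * uᴴ := by rw [hu]; noncomm_ring
  rw [frobSq, h, trace_mul_cycle, ← mul_assoc, hu, one_mul, frobSq]

lemma mcomm_conj {n : ℕ} (u D M : Matrix (Fin n) (Fin n) ℂ) (hu : u * uᴴ = 1) :
    u * (mcomm D (uᴴ * M * u)) * uᴴ = mcomm (u * D * uᴴ) M := by
  unfold mcomm
  calc u * (D * (uᴴ*M*u) - (uᴴ*M*u) * D) * uᴴ
      = (u*D*uᴴ) * (M * (u * uᴴ)) - ((u*uᴴ) * M) * (u*D*uᴴ) := by noncomm_ring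
    _ = u * D * uᴴ * M - M * (u * D * uᴴ) := by rw [hu, mul_one, one_mul]

lemma sq_sub_le {n : ℕ} (l : Fin n → ℝ) {i j : Fin n} (hij : i ≠ j) :
    (l i - l j) ^ 2 ≤ 2 * ∑ k, (l k) ^ 2 := by
  have h1 : ∑ k ∈ ({i, j} : Finset (Fin n)), (l k) ^ 2 ≤ ∑ k, (l k) ^ 2 :=
    Finset.sum_le_sum_of_subset_of_nonneg (Finset.subset_univ _)
      (fun k _ _ => sq_nonneg _)
  rw [Finset.sum_pair hij] at h1
  nlinarith [sq_nonneg (l i + l j)]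

lemma bw {n : ℕ} (A M : Matrix (Fin n) (Fin n) ℂ) (hA : A.IsHermitian) :
    frobSq (mcomm A M) ≤ 2 * frobSq A * frobSq M := by
  set u : Matrix (Fin n) (Fin n) ℂ := (hA.eigenvectorUnitary : Matrix (Fin n) (Fin n) ℂ) with hudef
  set l : Fin n → ℝ := hA.eigenvalues with hldef
  set D : Matrix (Fin n) (Fin n) ℂ := diagonal (fun i => (l i : ℂ)) with hDdef
  have hu : u * uᴴ = 1 := (Matrix.mem_unitaryGroup_iff).mp hA.eigenvectorUnitary.2
  have hu' : uᴴ * u = 1 := (Matrix.mem_unitaryGroup_iff').mp hA.eigenvectorUnitary.2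
  have hAeq : A = u * D * uᴴ := hA.spectral_theorem
  set M' : Matrix (Fin n) (Fin n) ℂ := uᴴ * M * u with hM'def
  have hcomm : frobSq (mcomm A M) = frobSq (mcomm D M') := by
    rw [hAeq, ← mcomm_conj u D M hu, frobSq_conj _ _ hu']
  have hM'frob : frobSq M' = frobSq M := by
    have : u * M' * uᴴ = M := by
      rw [hM'def]
      calc u * (uᴴ * M * u) * uᴴ = (u * uᴴ) * M * (u * uᴴ) := by noncomm_ring
        _ = M := by rw [hu]; simp
    rw [← frobSq_conj u M' hu', this]
  have hAfrob : frobSq A = ∑ k, (l k) ^ 2 := by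
    rw [hAeq, frobSq_conj _ _ hu', frobSq_eq_sum]
    simp [hDdef, Matrix.diagonal_apply, apply_ite Complex.normSq,
      Complex.normSq_ofReal, Finset.sum_ite_eq, Finset.sum_ite_eq', sq]
  have hentry : ∀ i j, (mcomm D M') i j = ((l i - l j : ℝ) : ℂ) * M' i j := by
    intro i j
    simp [mcomm, hDdef, Matrix.diagonal_mul, Matrix.mul_diagonal, Matrix.sub_apply,
      Complex.ofReal_sub, sub_mul, mul_comm]
  rw [hcomm, ← hM'frob, hAfrob, frobSq_eq_sum, frobSq_eq_sum]
  rw [Finset.mul_sum]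
  refine Finset.sum_le_sum fun i _ => ?_
  rw [Finset.mul_sum]
  refine Finset.sum_le_sum fun j _ => ?_
  rw [hentry i j, Complex.normSq_mul, Complex.normSq_ofReal, ← sq]
  rcases eq_or_ne i j with rfl | hij
  · rw [sub_self]
    simp only [ne_eq, zero_pow, OfNat.ofNat_ne_zero, not_false_eq_true, zero_mul]
    exact mul_nonneg (mul_nonneg (by norm_num)
      (Finset.sum_nonneg fun k _ => sq_nonneg _)) (Complex.normSq_nonneg _)
  · have := sq_sub_le l hij
    have h2 : (0:ℝ) ≤ Complex.normSq (M' i j) := Complex.normSq_nonneg _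
    calc (l i - l j)^2 * Complex.normSq (M' i j)
        ≤ (2 * ∑ k, (l k)^2) * Complex.normSq (M' i j) := by
          exact mul_le_mul_of_nonneg_right this h2
      _ = 2 * (∑ k, (l k)^2) * Complex.normSq (M' i j) := by ring

theorem ddvv_hermitian_two (n : ℕ) (hn : 1 ≤ n)
    (B : Fin 2 → Matrix (Fin n) (Fin n) ℂ) (hB : ∀ r, (B r)ᴴ = B r) :
    (∑ r : Fin 2, ∑ s : Fin 2, frobSq (mcomm (B r) (B s)) ≤
      (∑ r : Fin 2, frobSq (B r)) ^ 2) ∧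
    2 * frobSq (mcomm (B 0) (B 1)) ≤ (frobSq (B 0) + frobSq (B 1)) ^ 2 := by
  set a := frobSq (B 0) with ha
  set b := frobSq (B 1) with hb
  set c := frobSq (mcomm (B 0) (B 1)) with hc
  have hbw : c ≤ 2 * a * b := bw (B 0) (B 1) (hB 0)
  have ha0 : 0 ≤ a := frobSq_nonneg _
  have hb0 : 0 ≤ b := frobSq_nonneg _
  have hc0 : 0 ≤ c := frobSq_nonneg _
  have hkey : 2 * c ≤ (a + b) ^ 2 := by nlinarith [sq_nonneg (a - b)]
  constructor
  · have hself : ∀ r : Fin 2, frobSq (mcomm (B r) (B r)) = 0 := by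
      intro r; simp [mcomm, frobSq]
    have hswap : frobSq (mcomm (B 1) (B 0)) = c := by
      have : mcomm (B 1) (B 0) = -(mcomm (B 0) (B 1)) := by
        simp [mcomm]
      rw [this, frobSq_neg]
    rw [Fin.sum_univ_two, Fin.sum_univ_two, Fin.sum_univ_two, Fin.sum_univ_two,
      hself 0, hself 1, hswap]
    calc 0 + c + (c + 0) = 2 * c := by ring
      _ ≤ (a + b) ^ 2 := hkey
  · exact hkey
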